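/- arXiv:1210.0772 — 2 statements merged into one kernel-verified Lean document; each statement's English description precedes it below -/
import Mathlib

section
/- Let C be a covering of a finite nonempty set U. Then SH satisfies all four matroid closure axioms — (CL1) X ⊆ SH(X); (CL2) X ⊆ Y implies SH(X) ⊆ SH(Y); (CL3) SH(SH(X)) = SH(X); (CL4) y ∈ SH(X ∪ {x}) \ SH(X) implies x ∈ SH(X ∪ {y}) — if and only if the family {I(x) : x ∈ U} of indiscernible neighborhoods forms a partition of U, i.e., for all x, y ∈ U, either I(x) = I(y) or I(x) ∩ I(y) = ∅. -/
open Set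

/-- A covering of a finite nonempty universe `α`: a family of nonempty subsets whose union is everything. -/
def IsCovering {α : Type*} (C : Set (Set α)) : Prop :=
  (∀ K ∈ C, K.Nonempty) ∧ ⋃₀ C = Set.univ

/-- The second type of covering lower approximation. -/
def SL {α : Type*} (C : Set (Set α)) (X : Set α) : Set α :=
  ⋃₀ {K | K ∈ C ∧ K ⊆ X}

/-- The second type of covering upper approximation. -/
def SH {α : Type*} (C : Set (Set α)) (X : Set α) : Set α :=
  ⋃₀ {K | K ∈ C ∧ (K ∩ X).Nonempty}

/-- The minimal description of a point. -/
def Md {α : Type*} (C : Set (Set α)) (x : α) : Set (Set α) :=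
  {K | K ∈ C ∧ x ∈ K ∧ ∀ S ∈ C, x ∈ S → S ⊆ K → S = K}

/-- A covering is unary if every point has exactly one element in its minimal description. -/
def Unary {α : Type*} (C : Set (Set α)) : Prop :=
  ∀ x : α, ∃! K, K ∈ Md C x

/-- The neighborhood of a point. -/
def Nbhd {α : Type*} (C : Set (Set α)) (x : α) : Set α :=
  ⋂₀ {K | K ∈ C ∧ x ∈ K}

/-- The indiscernible neighborhood of a point. -/
def IndNbhd {α : Type*} (C : Set (Set α)) (x : α) : Set α :=
  ⋃₀ {K | K ∈ C ∧ x ∈ K}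

/-- A member of the covering is reducible if it is a union of other members. -/
def Reducible {α : Type*} (C : Set (Set α)) (K : Set α) : Prop :=
  ∃ D ⊆ C \ {K}, K = ⋃₀ D

/-- The reduct of a covering: its irreducible members. -/
def reduct {α : Type*} (C : Set (Set α)) : Set (Set α) :=
  {K | K ∈ C ∧ ¬ Reducible C K}

/-- The closure operator induced by the fixed point family of `SL`. -/
def clC {α : Type*} (C : Set (Set α)) (X : Set α) : Set α :=
  ⋂₀ {S | SL C S = S ∧ X ⊆ S}

/-!
The relation `x ∈ I(y)` is symmetric, and reflexive because `C` covers, and `SH(X)` is the set of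
points related to some point of `X`; in particular `SH {x} = I(x)`. (CL1), (CL2) and the exchange
property (CL4) hold for every covering, while idempotence (CL3) amounts to transitivity of the
relation, i.e. to the neighborhoods `I(x)` being its equivalence classes, which is the partition
condition.
-/

lemma mem_indNbhd_comm {α : Type*} (C : Set (Set α)) {x y : α} :
    x ∈ IndNbhd C y ↔ y ∈ IndNbhd C x := by
  simp only [IndNbhd, mem_sUnion, mem_ofPred_eq]
  tauto

lemma self_mem_indNbhd {α : Type*} {C : Set (Set α)} (hC : ⋃₀ C = univ) (x : α) :
    x ∈ IndNbhd C x := by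
  obtain ⟨K, hK, hxK⟩ : x ∈ ⋃₀ C := hC ▸ mem_univ x
  exact ⟨K, ⟨hK, hxK⟩, hxK⟩

lemma mem_SH_iff {α : Type*} (C : Set (Set α)) {X : Set α} {y : α} :
    y ∈ SH C X ↔ ∃ z ∈ X, z ∈ IndNbhd C y := by
  simp only [SH, IndNbhd, mem_sUnion, mem_ofPred_eq, Set.Nonempty, mem_inter_iff]
  tauto

lemma SH_singleton {α : Type*} (C : Set (Set α)) (x : α) : SH C {x} = IndNbhd C x := by
  ext y
  simp [mem_SH_iff, mem_indNbhd_comm C (x := x)]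

lemma SH_mono {α : Type*} (C : Set (Set α)) : Monotone (SH C) := fun _ _ hXY _ hy =>
  let ⟨z, hz, hzy⟩ := (mem_SH_iff C).1 hy
  (mem_SH_iff C).2 ⟨z, hXY hz, hzy⟩

lemma subset_SH {α : Type*} {C : Set (Set α)} (hC : ⋃₀ C = univ) (X : Set α) :
    X ⊆ SH C X := fun x hx =>
  (mem_SH_iff C).2 ⟨x, hx, self_mem_indNbhd hC x⟩

lemma mem_SH_union_singleton_of_mem_diff {α : Type*} (C : Set (Set α)) {X : Set α} {x y : α}
    (hy : y ∈ SH C (X ∪ {x}) \ SH C X) : x ∈ SH C (X ∪ {y}) := by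
  obtain ⟨z, hz, hzy⟩ := (mem_SH_iff C).1 hy.1
  obtain rfl : z = x := hz.resolve_left fun hzX => hy.2 <| (mem_SH_iff C).2 ⟨z, hzX, hzy⟩
  exact (mem_SH_iff C).2 ⟨y, Or.inr rfl, (mem_indNbhd_comm C).1 hzy⟩

section Transitive

variable {α : Type*} {C : Set (Set α)}
  (htrans : ∀ x y z : α, x ∈ IndNbhd C y → y ∈ IndNbhd C z → x ∈ IndNbhd C z)
include htrans

lemma indNbhd_eq_of_mem {x y : α} (h : y ∈ IndNbhd C x) : IndNbhd C x = IndNbhd C y := by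
  ext w
  exact ⟨fun hw => htrans w x y hw ((mem_indNbhd_comm C).1 h), fun hw => htrans w y x hw h⟩

lemma indNbhd_eq_or_disjoint (x y : α) :
    IndNbhd C x = IndNbhd C y ∨ IndNbhd C x ∩ IndNbhd C y = ∅ := by
  refine or_iff_not_imp_right.2 fun hne => ?_
  obtain ⟨z, hzx, hzy⟩ := nonempty_iff_ne_empty.2 hne
  exact (indNbhd_eq_of_mem htrans hzx).trans (indNbhd_eq_of_mem htrans hzy).symm

lemma SH_SH (hC : ⋃₀ C = univ) (X : Set α) : SH C (SH C X) = SH C X := by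
  refine (subset_SH hC _).antisymm' fun u hu => ?_
  obtain ⟨z, hz, hzu⟩ := (mem_SH_iff C).1 hu
  obtain ⟨w, hw, hwz⟩ := (mem_SH_iff C).1 hz
  exact (mem_SH_iff C).2 ⟨w, hw, htrans w z u hwz hzu⟩

end Transitive

lemma mem_indNbhd_trans_of_SH_SH {α : Type*} {C : Set (Set α)}
    (hidem : ∀ X : Set α, SH C (SH C X) = SH C X) (x y z : α)
    (hxy : x ∈ IndNbhd C y) (hyz : y ∈ IndNbhd C z) : x ∈ IndNbhd C z := by
  rw [← SH_singleton, ← hidem, mem_SH_iff, SH_singleton]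
  exact ⟨y, hyz, (mem_indNbhd_comm C).1 hxy⟩

lemma mem_indNbhd_trans_of_eq_or_disjoint {α : Type*} {C : Set (Set α)} (hC : ⋃₀ C = univ)
    (hpart : ∀ x y : α, IndNbhd C x = IndNbhd C y ∨ IndNbhd C x ∩ IndNbhd C y = ∅) (x y z : α)
    (hxy : x ∈ IndNbhd C y) (hyz : y ∈ IndNbhd C z) : x ∈ IndNbhd C z := by
  have hne : (IndNbhd C y ∩ IndNbhd C z).Nonempty := ⟨y, self_mem_indNbhd hC y, hyz⟩
  exact (hpart y z).resolve_right hne.ne_empty ▸ hxy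

theorem stmt_11_general {α : Type*} (C : Set (Set α))
    (hC : IsCovering C) :
    ((∀ X : Set α, X ⊆ SH C X) ∧
     (∀ X Y : Set α, X ⊆ Y → SH C X ⊆ SH C Y) ∧
     (∀ X : Set α, SH C (SH C X) = SH C X) ∧
     (∀ (X : Set α) (x y : α),
        y ∈ SH C (X ∪ {x}) \ SH C X → x ∈ SH C (X ∪ {y}))) ↔
    (∀ x y : α, IndNbhd C x = IndNbhd C y ∨ IndNbhd C x ∩ IndNbhd C y = ∅) := by
  constructor
  · rintro ⟨-, -, hidem, -⟩
    exact indNbhd_eq_or_disjoint (mem_indNbhd_trans_of_SH_SH hidem)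
  · intro hpart
    have htrans := mem_indNbhd_trans_of_eq_or_disjoint hC.2 hpart
    exact ⟨subset_SH hC.2, fun _ _ h => SH_mono C h, SH_SH htrans hC.2,
      fun _ _ _ => mem_SH_union_singleton_of_mem_diff C⟩

theorem stmt_11 {α : Type*} [Fintype α] [Nonempty α] (C : Set (Set α))
    (hC : IsCovering C) :
    ((∀ X : Set α, X ⊆ SH C X) ∧
     (∀ X Y : Set α, X ⊆ Y → SH C X ⊆ SH C Y) ∧
     (∀ X : Set α, SH C (SH C X) = SH C X) ∧
     (∀ (X : Set α) (x y : α),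
        y ∈ SH C (X ∪ {x}) \ SH C X → x ∈ SH C (X ∪ {y}))) ↔
    (∀ x y : α, IndNbhd C x = IndNbhd C y ∨ IndNbhd C x ∩ IndNbhd C y = ∅) :=
  stmt_11_general C hC
end

section
/- Let C be a unary covering of a finite nonempty set U. Then for every x ∈ U, the neighborhood N(x) equals ⋂ Md(x), the intersection of the minimal description of x; in particular N(x) ∈ C. -/
open Set

/-! By finiteness, every member of `C` containing `x` contains a minimal one, i.e. a member of
`Md C x`; hence `Nbhd C x = ⋂₀ Md C x` for any family `C`, and when `Md C x = {K}` this
intersection is `K ∈ C`. -/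

theorem exists_mem_Md_subset {α : Type*} [Finite α] {C : Set (Set α)} {x : α} {S : Set α}
    (hS : S ∈ C) (hxS : x ∈ S) : ∃ K ∈ Md C x, K ⊆ S := by
  obtain ⟨K, ⟨⟨hKC, hxK⟩, hKS⟩, hmin⟩ :=
    (toFinite {K | (K ∈ C ∧ x ∈ K) ∧ K ⊆ S}).exists_minimal ⟨S, ⟨hS, hxS⟩, subset_rfl⟩
  refine ⟨K, ⟨hKC, hxK, fun T hT hxT hTK => ?_⟩, hKS⟩
  exact hTK.antisymm (hmin ⟨⟨hT, hxT⟩, hTK.trans hKS⟩ hTK)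

theorem Nbhd_eq_sInter_Md {α : Type*} [Finite α] (C : Set (Set α)) (x : α) :
    Nbhd C x = ⋂₀ Md C x := by
  apply Subset.antisymm
  · exact sInter_subset_sInter fun K hK => ⟨hK.1, hK.2.1⟩
  · refine subset_sInter fun S ⟨hS, hxS⟩ => ?_
    obtain ⟨K, hK, hKS⟩ := exists_mem_Md_subset hS hxS
    exact (sInter_subset_of_mem hK).trans hKS

theorem Unary.exists_Md_eq_singleton {α : Type*} {C : Set (Set α)} (hU : Unary C) (x : α) :
    ∃ K, Md C x = {K} := by
  obtain ⟨K, hK, huniq⟩ := hU x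
  exact ⟨K, eq_singleton_iff_unique_mem.mpr ⟨hK, huniq⟩⟩

theorem stmt_19_general {α : Type*} [Fintype α] (C : Set (Set α))
    (hU : Unary C) (x : α) :
    Nbhd C x = ⋂₀ Md C x ∧ Nbhd C x ∈ C := by
  obtain ⟨K, hK⟩ := hU.exists_Md_eq_singleton x
  have hKC : K ∈ C := (hK.symm ▸ mem_singleton K : K ∈ Md C x).1
  rw [Nbhd_eq_sInter_Md, hK, sInter_singleton]
  exact ⟨rfl, hKC⟩

theorem stmt_19 {α : Type*} [Fintype α] [Nonempty α] (C : Set (Set α))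
    (hC : IsCovering C) (hU : Unary C) (x : α) :
    Nbhd C x = ⋂₀ Md C x ∧ Nbhd C x ∈ C :=
  stmt_19_general C hU x
end
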